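/- arXiv:2406.03360 — 10 statements merged into one kernel-verified Lean document; each statement's English description precedes it below -/
import Mathlib

section
/- Let L be an n×n real matrix with I_n + L invertible. The L-ensemble measure μ(S) = det(L_S)/det(I_n + L) on subsets of {1,...,n} is a probability measure (all values nonnegative, summing to 1) if and only if L is a P_0 matrix, i.e., det(L_S) ≥ 0 for all S ⊆ {1,...,n}. -/
open Matrix BigOperators

/-- The principal minor of `M` indexed by the subset `S`. -/
noncomputable def pminor {n : ℕ} (M : Matrix (Fin n) (Fin n) ℝ) (S : Finset (Fin n)) : ℝ :=
  (M.submatrix (fun i : {x // x ∈ S} => (i : Fin n)) (fun i : {x // x ∈ S} => (i : Fin n))).det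

lemma det_piecewise {n : ℕ} (L : Matrix (Fin n) (Fin n) ℝ) (S : Finset (Fin n)) :
    (Matrix.of (S.piecewise (fun i => L i) (fun i => (1 : Matrix (Fin n) (Fin n) ℝ) i))).det
      = pminor L S := by
  classical
  set M : Matrix (Fin n) (Fin n) ℝ :=
    Matrix.of (S.piecewise (fun i => L i) (fun i => (1 : Matrix (Fin n) (Fin n) ℝ) i)) with hM
  let e : {x // x ∈ S} ⊕ {x : Fin n // x ∉ S} ≃ Fin n :=
    Equiv.sumCompl (fun x => x ∈ S)
  have h1 : M.det = (M.submatrix e e).det := (Matrix.det_submatrix_equiv_self e M).symm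
  have h2 : M.submatrix e e =
      Matrix.fromBlocks
        (L.submatrix (fun i : {x // x ∈ S} => (i : Fin n)) (fun i : {x // x ∈ S} => (i : Fin n)))
        (L.submatrix (fun i : {x // x ∈ S} => (i : Fin n)) (fun i : {x : Fin n // x ∉ S} => (i : Fin n)))
        0 1 := by
    ext i j
    rcases i with i | i <;> rcases j with j | j <;>
      simp only [Matrix.submatrix_apply, Matrix.fromBlocks_apply₁₁, Matrix.fromBlocks_apply₁₂,
        Matrix.fromBlocks_apply₂₁, Matrix.fromBlocks_apply₂₂, hM, Matrix.of_apply,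
        Equiv.sumCompl_apply_inl, Equiv.sumCompl_apply_inr, e]
    · rw [Finset.piecewise_eq_of_mem _ _ _ i.2]
    · rw [Finset.piecewise_eq_of_mem _ _ _ i.2]
    · rw [Finset.piecewise_eq_of_notMem _ _ _ i.2]
      simp only [Matrix.zero_apply, Matrix.one_apply]
      exact if_neg (fun h : (i:Fin n) = j => i.2 (by rw [h]; exact j.2))
    · rw [Finset.piecewise_eq_of_notMem _ _ _ i.2]
      simp only [Matrix.one_apply]
      by_cases h : (i : Fin n) = (j : Fin n)
      · rw [if_pos h, if_pos (Subtype.ext h)]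
      · rw [if_neg h, if_neg (fun hh => h (congrArg Subtype.val hh))]
  rw [h1, h2, Matrix.det_fromBlocks_zero₂₁, Matrix.det_one, mul_one]
  rfl

lemma sum_pminor {n : ℕ} (L : Matrix (Fin n) (Fin n) ℝ) :
    ∑ S : Finset (Fin n), pminor L S = (1 + L).det := by
  classical
  have key : (1 + L).det =
      ((Matrix.detRowAlternating : (Fin n → ℝ) [⋀^Fin n]→ₗ[ℝ] ℝ) : 
        MultilinearMap ℝ (fun _ : Fin n => Fin n → ℝ) ℝ)
        ((fun i => L i) + (fun i => (1 : Matrix (Fin n) (Fin n) ℝ) i)) := by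
    congr 1
    ext i j
    simp [Matrix.add_apply, add_comm]
  rw [key, MultilinearMap.map_add_univ]
  refine Finset.sum_congr rfl fun S _ => ?_
  exact (det_piecewise L S).symm

lemma pminor_empty {n : ℕ} (L : Matrix (Fin n) (Fin n) ℝ) : pminor L ∅ = 1 := by
  haveI : IsEmpty {x : Fin n // x ∈ (∅ : Finset (Fin n))} :=
    ⟨fun x => absurd x.2 (Finset.notMem_empty x.1)⟩
  exact Matrix.det_isEmpty

theorem Lensemble_isProbability_iff_P0 {n : ℕ} (L : Matrix (Fin n) (Fin n) ℝ)
    (hL : IsUnit (1 + L).det) :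
    ((∀ S : Finset (Fin n), 0 ≤ pminor L S / (1 + L).det) ∧
      ∑ S : Finset (Fin n), pminor L S / (1 + L).det = 1) ↔
    ∀ S : Finset (Fin n), 0 ≤ pminor L S := by
  have hne : (1 + L).det ≠ 0 := hL.ne_zero
  constructor
  · rintro ⟨hpos, -⟩ S
    have h0 : 0 ≤ pminor L ∅ / (1 + L).det := hpos ∅
    rw [pminor_empty] at h0
    have hdpos : 0 < (1 + L).det := by
      rw [one_div] at h0
      exact (inv_nonneg.mp h0).lt_of_ne (Ne.symm hne)
    have := hpos S
    have := mul_nonneg this hdpos.le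
    rwa [div_mul_cancel₀ _ hne] at this
  · intro hp
    have hdpos : 0 < (1 + L).det := by
      rw [← sum_pminor L]
      have h1 : (1:ℝ) ≤ ∑ S : Finset (Fin n), pminor L S := by
        rw [← pminor_empty L]
        exact Finset.single_le_sum (fun S _ => hp S) (Finset.mem_univ ∅)
      linarith [pminor_empty L]
    refine ⟨fun S => div_nonneg (hp S) hdpos.le, ?_⟩
    rw [← Finset.sum_div, sum_pminor, div_self hne]
end

section
/- Let K be the kernel of a determinantal point process X on {1,...,n} and let S ⊆ {1,...,n}. Then the particle-hole transform X̃ = (X ∩ S^c) ∪ (X^c ∩ S) is a determinantal point process with kernel K̃ = D(1_S)(I_n − K) + D(1_{S^c})K; that is, for all T ⊆ {1,...,n}, P(T ⊆ X̃) = det(K̃_T). -/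
open Matrix BigOperators Finset

/-- The indicator vector of the subset `S`. -/
def indVec {n : ℕ} (S : Finset (Fin n)) : Fin n → ℝ := fun i => if i ∈ S then 1 else 0

/-! Multilinearity of the determinant in the rows gives, for diagonal `D(a)`, `D(b)`,
`det (D(a) + D(b) K)_T = ∑_{t ⊆ T} ∏_{t} b · ∏_{T \ t} a · det K_t`, and expanding
`∏_{i ∈ T} (a_i + b_i 1_X(i))` gives the same sum with `P(t ⊆ X)`, which is `det K_t`.
So `E ∏_{i ∈ T} (a_i + b_i 1_X(i)) = det (D(a) + D(b) K)_T` for every determinantal process,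
and the particle–hole transform is the case `a = 1_S`, `b = 1_{Sᶜ} - 1_S`, because
`1_X̃ = 1_S + (1_{Sᶜ} - 1_S) 1_X`. -/

theorem Matrix.det_diagonal_add_diagonal_mul {ι R : Type*} [Fintype ι] [DecidableEq ι]
    [CommRing R] (a b : ι → R) (M : Matrix ι ι R) :
    (diagonal a + diagonal b * M).det =
      ∑ t : Finset ι, (∏ i ∈ t, b i) * (∏ i ∈ tᶜ, a i) *
        (M.submatrix ((↑) : t → ι) (↑)).det := by
  have hrows : (diagonal a + diagonal b * M : Matrix ι ι R) =
      (fun i => b i • M i) + (fun i => a i • (1 : Matrix ι ι R) i) := by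
    ext i j
    simp [diagonal_mul, one_apply, diagonal_apply, add_comm]
  have hpiece (t : Finset ι) :
      t.piecewise (fun i => b i • M i) (fun i => a i • (1 : Matrix ι ι R) i) =
        fun i => t.piecewise b a i • t.piecewise M.row (1 : Matrix ι ι R).row i := by
    funext i
    by_cases hi : i ∈ t <;> simp [hi, Matrix.row, Finset.piecewise]
  calc (diagonal a + diagonal b * M).det
      = ∑ t : Finset ι, detRowAlternating
          (t.piecewise (fun i => b i • M i) (fun i => a i • (1 : Matrix ι ι R) i)) := by
        rw [hrows]; exact detRowAlternating.map_add_univ _ _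
    _ = ∑ t : Finset ι, (∏ i, t.piecewise b a i) *
          (of (t.piecewise M.row (1 : Matrix ι ι R).row)).det := by
        simp_rw [hpiece, detRowAlternating.map_smul_univ, smul_eq_mul]; rfl
    _ = _ := by
        simp_rw [prod_piecewise, univ_inter, compl_eq_univ_sdiff,
          det_piecewise_one_eq_submatrix_det]

lemma prod_indVec {n : ℕ} (T A : Finset (Fin n)) :
    ∏ i ∈ T, indVec A i = if T ⊆ A then 1 else 0 :=
  prod_boole

lemma Matrix.of_piecewise_diagonal_add_diagonal_mul {ι R : Type*} [Fintype ι] [DecidableEq ι]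
    [CommRing R] (a b : ι → R) (M : Matrix ι ι R) (T : Finset ι) :
    of (T.piecewise (diagonal a + diagonal b * M).row (1 : Matrix ι ι R).row) =
      diagonal (T.piecewise a 1) + diagonal (T.piecewise b 0) * M := by
  ext i j
  by_cases hi : i ∈ T <;> simp [hi, Matrix.row, Finset.piecewise, diagonal_mul, one_apply,
    diagonal_apply]

section DPP

variable {n : ℕ} {K : Matrix (Fin n) (Fin n) ℝ} {μ : Finset (Fin n) → ℝ}

theorem sum_mul_prod_add_mul_indVec_eq_det
    (hdpp : ∀ T : Finset (Fin n),
      ∑ A ∈ Finset.univ.filter (fun A : Finset (Fin n) => T ⊆ A), μ A = pminor K T)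
    (a b : Fin n → ℝ) :
    ∑ A, μ A * ∏ i, (a i + b i * indVec A i) = (diagonal a + diagonal b * K).det := by
  have hexpand (A : Finset (Fin n)) : ∏ i, (a i + b i * indVec A i) =
      ∑ t : Finset (Fin n), (∏ i ∈ t, b i) * (∏ i ∈ tᶜ, a i) * if t ⊆ A then 1 else 0 := by
    simp_rw [add_comm (a _), prod_add, powerset_univ, prod_mul_distrib, prod_indVec,
      compl_eq_univ_sdiff]
    exact sum_congr rfl fun t _ => by ring
  calc ∑ A, μ A * ∏ i, (a i + b i * indVec A i)
      = ∑ t : Finset (Fin n), (∏ i ∈ t, b i) * (∏ i ∈ tᶜ, a i) *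
          ∑ A ∈ univ.filter (fun A => t ⊆ A), μ A := by
        simp_rw [hexpand, sum_filter, mul_sum]
        rw [sum_comm]
        exact sum_congr rfl fun t _ => sum_congr rfl fun A _ => by split_ifs <;> ring
    _ = _ := by
        simp_rw [hdpp, det_diagonal_add_diagonal_mul]
        rfl

theorem sum_mul_prod_add_mul_indVec_eq_pminor
    (hdpp : ∀ T : Finset (Fin n),
      ∑ A ∈ Finset.univ.filter (fun A : Finset (Fin n) => T ⊆ A), μ A = pminor K T)
    (a b : Fin n → ℝ) (T : Finset (Fin n)) :
    ∑ A, μ A * ∏ i ∈ T, (a i + b i * indVec A i) = pminor (diagonal a + diagonal b * K) T := by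
  -- padding `a` by `1` and `b` by `0` outside `T` turns the minor on `T` into a full determinant
  have hfactor (A : Finset (Fin n)) :
      (fun i => T.piecewise a 1 i + T.piecewise b 0 i * indVec A i) =
        T.piecewise (fun i => a i + b i * indVec A i) 1 := by
    funext i
    by_cases hi : i ∈ T <;> simp [hi]
  rw [pminor, ← det_piecewise_one_eq_submatrix_det, of_piecewise_diagonal_add_diagonal_mul,
    ← sum_mul_prod_add_mul_indVec_eq_det hdpp]
  simp_rw [hfactor, prod_piecewise, univ_inter, Pi.one_apply, prod_const_one, mul_one]

end DPP

theorem particle_hole_transform_general {n : ℕ} (K : Matrix (Fin n) (Fin n) ℝ)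
    (μ : Finset (Fin n) → ℝ)
    (hdpp : ∀ T : Finset (Fin n),
      ∑ A ∈ Finset.univ.filter (fun A : Finset (Fin n) => T ⊆ A), μ A = pminor K T)
    (S : Finset (Fin n)) (T : Finset (Fin n)) :
    ∑ A ∈ Finset.univ.filter (fun A : Finset (Fin n) => T ⊆ (A \ S) ∪ (S \ A)), μ A
      = pminor (Matrix.diagonal (indVec S) * (1 - K) + Matrix.diagonal (indVec Sᶜ) * K) T := by
  have hflip (A : Finset (Fin n)) (i : Fin n) :
      indVec ((A \ S) ∪ (S \ A)) i = indVec S i + (indVec Sᶜ i - indVec S i) * indVec A i := by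
    by_cases hA : i ∈ A <;> by_cases hS : i ∈ S <;> simp [indVec, hA, hS]
  have hkernel : diagonal (indVec S) * (1 - K) + diagonal (indVec Sᶜ) * K =
      diagonal (indVec S) + diagonal (fun i => indVec Sᶜ i - indVec S i) * K := by
    rw [mul_sub, mul_one, ← diagonal_sub, sub_mul]
    abel
  calc ∑ A ∈ univ.filter (fun A => T ⊆ (A \ S) ∪ (S \ A)), μ A
      = ∑ A, μ A * ∏ i ∈ T, indVec ((A \ S) ∪ (S \ A)) i := by
        simp_rw [sum_filter, prod_indVec, mul_ite, mul_one, mul_zero]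
    _ = _ := by
        simp_rw [hflip, sum_mul_prod_add_mul_indVec_eq_pminor hdpp, hkernel]

theorem particle_hole_transform {n : ℕ} (K : Matrix (Fin n) (Fin n) ℝ)
    (μ : Finset (Fin n) → ℝ) (hpos : ∀ A, 0 ≤ μ A)
    (hdpp : ∀ T : Finset (Fin n),
      ∑ A ∈ Finset.univ.filter (fun A : Finset (Fin n) => T ⊆ A), μ A = pminor K T)
    (S : Finset (Fin n)) (T : Finset (Fin n)) :
    ∑ A ∈ Finset.univ.filter (fun A : Finset (Fin n) => T ⊆ (A \ S) ∪ (S \ A)), μ A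
      = pminor (Matrix.diagonal (indVec S) * (1 - K) + Matrix.diagonal (indVec Sᶜ) * K) T :=
  particle_hole_transform_general K μ hdpp S T
end

section
/- Let X ∼ DPP(K) on {1,...,n}, let p_1,...,p_n ∈ [0,1], and let B_1,...,B_n be independent Bernoulli(p_i) variables independent of X. Define X̃ = {i : (i ∈ X and B_i = 0) or (i ∉ X and B_i = 1)}. Then X̃ ∼ DPP(D(p)(I_n − K) + D(1_n − p)K). -/
open Matrix BigOperators Finset

/-! Given `X`, the events `i ∈ X̃` are independent with probabilities `p i + [i ∈ X] (1 - 2 p i)`.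
Summing out the coordinates outside `T`, whose two switching weights add up to `1`, gives
`P(T ⊆ X̃) = E ∏_{i ∈ T} (p i + [i ∈ X] (1 - 2 p i))`. Expanding the product over `S ⊆ T` and using
`P(S ⊆ X) = det K_S` yields `∑_{S ⊆ T} ∏_{T \ S} p i ∏_S (1 - 2 p i) det K_S`, which is the expansion
of the principal minor `det (D(p) + D(1 - 2p) K)_T` by multilinearity in the rows; finally
`D(p) (I - K) + D(1 - p) K = D(p) + D(1 - 2p) K`. -/

section

variable {ι R : Type*} [DecidableEq ι] [CommRing R]

theorem Matrix.det_add_diagonal [Fintype ι] (M : Matrix ι ι R) (d : ι → R) :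
    (M + diagonal d).det =
      ∑ s : Finset ι, (∏ i ∈ sᶜ, d i) * (M.submatrix (↑) (↑) : Matrix s s R).det := by
  have hrows : M + diagonal d = of (M.row + fun i => d i • (1 : Matrix ι ι R).row i) := by
    ext i j
    simp [diagonal_apply, one_apply]
  rw [hrows]
  change detRowAlternating (M.row + _) = _
  rw [detRowAlternating.map_add_univ]
  refine sum_congr rfl fun s _ => ?_
  have hpw : s.piecewise M.row (fun i => d i • (1 : Matrix ι ι R).row i) =
      sᶜ.piecewise (fun i => d i • s.piecewise M.row (1 : Matrix ι ι R).row i)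
        (s.piecewise M.row (1 : Matrix ι ι R).row) := by
    rw [piecewise_compl]
    ext i : 1
    by_cases hi : i ∈ s <;> simp [hi]
  rw [hpw]
  exact (detRowAlternating.toMultilinearMap.map_piecewise_smul _ _ _).trans
    (congrArg _ (det_piecewise_one_eq_submatrix_det M s))

theorem Matrix.det_submatrix_map_subtype (M : Matrix ι ι R) (T : Finset ι) (s : Finset T) :
    (M.submatrix ((↑) : s.map (Function.Embedding.subtype (· ∈ T)) → ι) (↑)).det =
      ((M.submatrix ((↑) : T → ι) (↑)).submatrix (Subtype.val : s → T) Subtype.val).det :=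
  (det_submatrix_equiv_self (s.equivMap (Function.Embedding.subtype _)) _).symm

theorem Matrix.det_submatrix_add_diagonal (M : Matrix ι ι R) (d : ι → R) (T : Finset ι) :
    ((M + diagonal d).submatrix ((↑) : T → ι) (↑)).det =
      ∑ S ∈ T.powerset, (∏ i ∈ T \ S, d i) * (M.submatrix ((↑) : S → ι) (↑)).det := by
  rw [submatrix_add, Pi.add_apply, Pi.add_apply, submatrix_diagonal _ _ Subtype.val_injective,
    det_add_diagonal]
  refine sum_bij (fun s _ => s.map (Function.Embedding.subtype _)) (fun s _ => ?_)
    (fun s _ t _ h => Finset.map_injective _ h) (fun S hS => ⟨S.subtype (· ∈ T), mem_univ _, ?_⟩)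
    (fun s _ => ?_)
  · simpa [subset_iff] using fun x hx _ => hx
  · exact subtype_map_of_mem fun x hx => mem_powerset.1 hS hx
  · rw [det_submatrix_map_subtype]
    congr 1
    refine (prod_map sᶜ (Function.Embedding.subtype _) d).symm.trans
      (congrArg (∏ i ∈ ·, d i) ?_)
    ext x
    simpa using ⟨fun ⟨hx, hs⟩ => ⟨hx, fun _ => hs⟩, fun ⟨hx, hs⟩ => ⟨hx, hs hx⟩⟩

variable [Fintype ι]

theorem Matrix.det_submatrix_diagonal_mul (q : ι → R) (M : Matrix ι ι R)
    (S : Finset ι) :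
    ((diagonal q * M).submatrix ((↑) : S → ι) (↑)).det =
      (∏ i ∈ S, q i) * (M.submatrix ((↑) : S → ι) (↑)).det := by
  have h : (diagonal q * M).submatrix ((↑) : S → ι) (↑) =
      diagonal (fun i : S => q i) * M.submatrix (↑) (↑) := by
    ext i j
    simp [diagonal_mul]
  rw [h, det_mul, det_diagonal, prod_coe_sort S q]

theorem Finset.sum_superset_prod_mul_prod_compl (T : Finset ι) (a b : ι → R) :
    ∑ B ∈ univ.filter (T ⊆ ·), (∏ i ∈ B, a i) * ∏ i ∈ Bᶜ, b i =
      (∏ i ∈ T, a i) * ∏ i ∈ Tᶜ, (a i + b i) := by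
  -- `g` kills the terms of `Fintype.prod_add` indexed by the `B` that miss a point of `T`.
  set g : ι → R := fun i => if i ∈ T then 0 else b i
  calc ∑ B ∈ univ.filter (T ⊆ ·), (∏ i ∈ B, a i) * ∏ i ∈ Bᶜ, b i
      = ∑ B, (∏ i ∈ B, a i) * ∏ i ∈ Bᶜ, g i := by
        rw [sum_filter]
        refine sum_congr rfl fun B _ => ?_
        split_ifs with hTB
        · refine congrArg _ (prod_congr rfl fun i hi => ?_)
          simp only [g, if_neg fun hiT => mem_compl.1 hi (hTB hiT)]
        · obtain ⟨i, hiT, hiB⟩ := not_subset.1 hTB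
          rw [prod_eq_zero (mem_compl.2 hiB) (by simp [g, hiT]), mul_zero]
    _ = ∏ i, (a i + g i) := (Fintype.prod_add a g).symm
    _ = (∏ i ∈ T, a i) * ∏ i ∈ Tᶜ, (a i + b i) := by
        rw [← prod_mul_prod_compl T (fun i => a i + g i)]
        congr 1 <;> refine prod_congr rfl fun i hi => ?_
        · simp [g, hi]
        · simp [g, mem_compl.1 hi]

theorem Finset.sum_superset_prod_ite_iff (T A : Finset ι) (p : ι → R) :
    ∑ B ∈ univ.filter (T ⊆ ·), ∏ i, (if (i ∈ B ↔ i ∈ A) then 1 - p i else p i) =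
      ∏ i ∈ T, (if i ∈ A then 1 - p i else p i) := by
  have h : ∀ B : Finset ι, ∏ i, (if (i ∈ B ↔ i ∈ A) then 1 - p i else p i) =
      (∏ i ∈ B, if i ∈ A then 1 - p i else p i) * ∏ i ∈ Bᶜ, if i ∈ A then p i else 1 - p i := by
    intro B
    rw [← prod_mul_prod_compl B]
    congr 1 <;> refine prod_congr rfl fun i hi => ?_
    · simp [hi]
    · by_cases hiA : i ∈ A <;> simp [mem_compl.1 hi, hiA]
  simp only [h, sum_superset_prod_mul_prod_compl]
  rw [prod_eq_one (s := Tᶜ) fun i _ => by split_ifs <;> ring, mul_one]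

theorem Finset.sum_mul_prod_ite_mem (μ : Finset ι → R) (T : Finset ι) (a b : ι → R) :
    ∑ A, μ A * ∏ i ∈ T, (if i ∈ A then a i else b i) =
      ∑ S ∈ T.powerset,
        (∏ i ∈ T \ S, b i) * ((∏ i ∈ S, (a i - b i)) * ∑ A ∈ univ.filter (S ⊆ ·), μ A) := by
  have hexpand : ∀ A : Finset ι, ∏ i ∈ T, (if i ∈ A then a i else b i) =
      ∑ S ∈ T.powerset, (if S ⊆ A then ∏ i ∈ S, (a i - b i) else 0) * ∏ i ∈ T \ S, b i := by
    intro A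
    calc ∏ i ∈ T, (if i ∈ A then a i else b i)
        = ∏ i ∈ T, ((if i ∈ A then a i - b i else 0) + b i) :=
          prod_congr rfl fun i _ => by split_ifs <;> ring
      _ = _ := by
          rw [prod_add]
          simp only [prod_ite_zero]
          rfl
  simp only [hexpand, mul_sum]
  rw [sum_comm]
  refine sum_congr rfl fun S _ => ?_
  rw [sum_filter]
  refine sum_congr rfl fun A _ => ?_
  split_ifs <;> ring

end

theorem pminor_diagonal_add_diagonal_mul {n : ℕ} (d q : Fin n → ℝ)
    (K : Matrix (Fin n) (Fin n) ℝ) (T : Finset (Fin n)) :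
    pminor (diagonal d + diagonal q * K) T =
      ∑ S ∈ T.powerset, (∏ i ∈ T \ S, d i) * ((∏ i ∈ S, q i) * pminor K S) := by
  rw [pminor, add_comm, det_submatrix_add_diagonal]
  simp only [det_submatrix_diagonal_mul]
  rfl

theorem random_switching_is_DPP_general {n : ℕ} (K : Matrix (Fin n) (Fin n) ℝ)
    (μ : Finset (Fin n) → ℝ)
    (hdpp : ∀ T : Finset (Fin n),
      ∑ A ∈ Finset.univ.filter (fun A : Finset (Fin n) => T ⊆ A), μ A = pminor K T)
    (p : Fin n → ℝ)
    -- `ν B` is the probability that the switched process equals `B`: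
    (ν : Finset (Fin n) → ℝ)
    (hν : ∀ B : Finset (Fin n),
      ν B = ∑ A : Finset (Fin n), μ A * ∏ i, (if ((i ∈ B) ↔ (i ∈ A)) then 1 - p i else p i)) :
    ∀ T : Finset (Fin n),
      ∑ B ∈ Finset.univ.filter (fun B : Finset (Fin n) => T ⊆ B), ν B
        = pminor (Matrix.diagonal p * (1 - K) + Matrix.diagonal (fun i => 1 - p i) * K) T := by
  intro T
  have hmat : diagonal p * (1 - K) + diagonal (fun i => 1 - p i) * K =
      diagonal p + diagonal (fun i => 1 - p i - p i) * K := by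
    rw [← diagonal_sub (fun i => 1 - p i) p, sub_mul, mul_sub, mul_one]
    abel
  calc ∑ B ∈ univ.filter (T ⊆ ·), ν B
      = ∑ A, μ A * ∏ i ∈ T, (if i ∈ A then 1 - p i else p i) := by
        simp only [hν]
        rw [sum_comm]
        simp only [← mul_sum, sum_superset_prod_ite_iff]
    _ = ∑ S ∈ T.powerset, (∏ i ∈ T \ S, p i) * ((∏ i ∈ S, (1 - p i - p i)) * pminor K S) := by
        simp only [sum_mul_prod_ite_mem, hdpp]
    _ = _ := by rw [hmat, pminor_diagonal_add_diagonal_mul]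

theorem random_switching_is_DPP {n : ℕ} (K : Matrix (Fin n) (Fin n) ℝ)
    (μ : Finset (Fin n) → ℝ) (hpos : ∀ A, 0 ≤ μ A)
    (hdpp : ∀ T : Finset (Fin n),
      ∑ A ∈ Finset.univ.filter (fun A : Finset (Fin n) => T ⊆ A), μ A = pminor K T)
    (p : Fin n → ℝ) (hp : ∀ i, p i ∈ Set.Icc (0 : ℝ) 1)
    -- `ν B` is the probability that the switched process equals `B`:
    (ν : Finset (Fin n) → ℝ)
    (hν : ∀ B : Finset (Fin n),
      ν B = ∑ A : Finset (Fin n), μ A * ∏ i, (if ((i ∈ B) ↔ (i ∈ A)) then 1 - p i else p i)) :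
    ∀ T : Finset (Fin n),
      ∑ B ∈ Finset.univ.filter (fun B : Finset (Fin n) => T ⊆ B), ν B
        = pminor (Matrix.diagonal p * (1 - K) + Matrix.diagonal (fun i => 1 - p i) * K) T :=
  random_switching_is_DPP_general K μ hdpp p ν hν
end

section
/- An n×n real matrix K is a DPP kernel (i.e., S ↦ det( D(1_{S^c})(I_n−K) + D(1_S)K ) defines a probability distribution with all values nonnegative) if and only if det( D(p)(I_n−K) + D(1_n−p)K ) > 0 for all p ∈ (0,1)^n. -/
open Matrix BigOperators Finset

lemma vertex_eq {n : ℕ} (K : Matrix (Fin n) (Fin n) ℝ) (S : Finset (Fin n)) :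
    Matrix.diagonal (indVec Sᶜ) * (1 - K) + Matrix.diagonal (indVec S) * K
      = Matrix.of (S.piecewise (fun i => K i) (fun i => (1 - K) i)) := by
  ext i j
  by_cases h : i ∈ S <;>
    simp [Matrix.add_apply, Matrix.diagonal_mul, indVec, Finset.piecewise, h]

lemma sum_det {n : ℕ} (K : Matrix (Fin n) (Fin n) ℝ) :
    ∑ S : Finset (Fin n),
        (Matrix.diagonal (indVec Sᶜ) * (1 - K) + Matrix.diagonal (indVec S) * K).det = 1 := by
  have h := (Matrix.detRowAlternating (n := Fin n) (R := ℝ)).toMultilinearMap.map_add_univ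
      (fun i => K i) (fun i => (1 - K) i)
  have h1 : ((fun i => K i) + fun i => (1 - K) i) = (1 : Matrix (Fin n) (Fin n) ℝ) := by
    funext i j; simp [Matrix.one_apply, Matrix.sub_apply]
  rw [h1] at h
  calc ∑ S : Finset (Fin n),
        (Matrix.diagonal (indVec Sᶜ) * (1 - K) + Matrix.diagonal (indVec S) * K).det
      = ∑ S : Finset (Fin n),
          Matrix.detRowAlternating (S.piecewise (fun i => K i) (fun i => (1 - K) i)) := by
        refine Finset.sum_congr rfl fun S _ => ?_
        rw [vertex_eq]; rfl
    _ = Matrix.detRowAlternating (1 : Matrix (Fin n) (Fin n) ℝ) := h.symm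
    _ = 1 := by show Matrix.det (1 : Matrix (Fin n) (Fin n) ℝ) = 1; simp

lemma expansion {n : ℕ} (K : Matrix (Fin n) (Fin n) ℝ) (p : Fin n → ℝ) :
    (Matrix.diagonal p * (1 - K) + Matrix.diagonal (fun i => 1 - p i) * K).det
      = ∑ S : Finset (Fin n), ((∏ i ∈ S, (1 - p i)) * ∏ i ∈ Sᶜ, p i) *
          (Matrix.diagonal (indVec Sᶜ) * (1 - K) + Matrix.diagonal (indVec S) * K).det := by
  have h := (Matrix.detRowAlternating (n := Fin n) (R := ℝ)).toMultilinearMap.map_add_univ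
      (fun i => (1 - p i) • K i) (fun i => p i • ((1 - K) i))
  have h1 : ((fun i => (1 - p i) • K i) + fun i => p i • ((1 - K) i))
      = fun i => (Matrix.diagonal p * (1 - K) + Matrix.diagonal (fun i => 1 - p i) * K) i := by
    funext i j
    simp [Matrix.add_apply, Matrix.diagonal_mul, Matrix.sub_apply]
    ring
  rw [h1, AlternatingMap.coe_multilinearMap] at h
  have hL : (Matrix.diagonal p * (1 - K) + Matrix.diagonal (fun i => 1 - p i) * K).det
      = Matrix.detRowAlternating
          (fun i => (Matrix.diagonal p * (1 - K) + Matrix.diagonal (fun i => 1 - p i) * K) i) := rfl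
  rw [hL, h]
  refine Finset.sum_congr rfl fun S _ => ?_
  have h2 : (S.piecewise (fun i => (1 - p i) • K i) (fun i => p i • ((1 - K) i)))
      = fun i j => (if i ∈ S then 1 - p i else p i) *
          (Matrix.of (S.piecewise (fun i => K i) (fun i => (1 - K) i))) i j := by
    funext i j
    by_cases h : i ∈ S <;> simp [Finset.piecewise, h]
  have h3 : Matrix.detRowAlternating (S.piecewise (fun i => (1 - p i) • K i)
        (fun i => p i • ((1 - K) i)))
      = (Matrix.of fun i j => (if i ∈ S then 1 - p i else p i) *
          (Matrix.of (S.piecewise (fun i => K i) (fun i => (1 - K) i))) i j).det := by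
    rw [h2]; rfl
  rw [h3, Matrix.det_mul_column, vertex_eq]
  congr 1
  rw [Finset.prod_ite]
  congr 1 <;> [skip; skip] <;> · congr 1; ext x; simp

lemma contF {n : ℕ} (K : Matrix (Fin n) (Fin n) ℝ) :
    Continuous (fun p : Fin n → ℝ =>
      (Matrix.diagonal p * (1 - K) + Matrix.diagonal (fun i => 1 - p i) * K).det) := by
  apply Continuous.matrix_det
  apply continuous_matrix
  intro i j
  simp only [Matrix.add_apply, Matrix.diagonal_mul]
  fun_prop

lemma ind_compl {n : ℕ} (S : Finset (Fin n)) :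
    (fun i => 1 - indVec Sᶜ i) = indVec S := by
  funext i; by_cases h : i ∈ S <;> simp [indVec, h]

open Filter Topology in
lemma det_nonneg_of_pos {n : ℕ} (K : Matrix (Fin n) (Fin n) ℝ)
    (h : ∀ p : Fin n → ℝ, (∀ i, p i ∈ Set.Ioo (0 : ℝ) 1) →
      0 < (Matrix.diagonal p * (1 - K) + Matrix.diagonal (fun i => 1 - p i) * K).det)
    (S : Finset (Fin n)) :
    0 ≤ (Matrix.diagonal (indVec Sᶜ) * (1 - K) + Matrix.diagonal (indVec S) * K).det := by
  set F := fun p : Fin n → ℝ =>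
      (Matrix.diagonal p * (1 - K) + Matrix.diagonal (fun i => 1 - p i) * K).det with hF
  have hgoal : (Matrix.diagonal (indVec Sᶜ) * (1 - K) + Matrix.diagonal (indVec S) * K).det
      = F (indVec Sᶜ) := by rw [hF]; simp only [ind_compl]
  rw [hgoal]
  have hq : Continuous (fun ε : ℝ => (fun i => (1 - 2 * ε) * indVec Sᶜ i + ε)) := by fun_prop
  have hq0 : (fun i => (1 - 2 * (0:ℝ)) * indVec Sᶜ i + 0) = indVec Sᶜ := by
    funext i; ring
  have key : Tendsto (fun ε : ℝ => F (fun i => (1 - 2 * ε) * indVec Sᶜ i + ε))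
      (𝓝[>] (0:ℝ)) (𝓝 (F (indVec Sᶜ))) := by
    have h2 : F (indVec Sᶜ) = F (fun i => (1 - 2 * (0:ℝ)) * indVec Sᶜ i + 0) := by rw [hq0]
    rw [h2]
    exact (((contF K).comp hq).tendsto 0).mono_left nhdsWithin_le_nhds
  refine ge_of_tendsto key ?_
  filter_upwards [Ioo_mem_nhdsGT_of_mem (by norm_num : (0:ℝ) ∈ Set.Ico 0 (1/2))] with ε hε
  refine le_of_lt (h _ fun i => ?_)
  by_cases hi : i ∈ Sᶜ
  · simp only [indVec, hi, if_pos]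
    constructor <;> [linarith [hε.1, hε.2]; linarith [hε.1, hε.2]]
  · simp only [indVec, hi, if_neg, if_false]
    constructor <;> [linarith [hε.1, hε.2]; linarith [hε.1, hε.2]]

theorem isDPPKernel_iff_pos_det {n : ℕ} (K : Matrix (Fin n) (Fin n) ℝ) :
    ((∀ S : Finset (Fin n),
        0 ≤ (Matrix.diagonal (indVec Sᶜ) * (1 - K) + Matrix.diagonal (indVec S) * K).det) ∧
      ∑ S : Finset (Fin n),
        (Matrix.diagonal (indVec Sᶜ) * (1 - K) + Matrix.diagonal (indVec S) * K).det = 1) ↔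
    ∀ p : Fin n → ℝ, (∀ i, p i ∈ Set.Ioo (0 : ℝ) 1) →
      0 < (Matrix.diagonal p * (1 - K) + Matrix.diagonal (fun i => 1 - p i) * K).det := by
  constructor
  · rintro ⟨hnn, hsum⟩ p hp
    rw [expansion]
    have hex : ∃ S : Finset (Fin n), (0:ℝ) <
        (Matrix.diagonal (indVec Sᶜ) * (1 - K) + Matrix.diagonal (indVec S) * K).det := by
      by_contra hc
      push_neg at hc
      have : ∑ S : Finset (Fin n),
          (Matrix.diagonal (indVec Sᶜ) * (1 - K) + Matrix.diagonal (indVec S) * K).det = 0 :=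
        Finset.sum_eq_zero fun S _ => le_antisymm (hc S) (hnn S)
      rw [this] at hsum
      norm_num at hsum
    obtain ⟨S₀, hS₀⟩ := hex
    have hw : ∀ S : Finset (Fin n), (0:ℝ) < (∏ i ∈ S, (1 - p i)) * ∏ i ∈ Sᶜ, p i := fun S =>
      mul_pos (Finset.prod_pos fun i _ => by linarith [(hp i).2])
        (Finset.prod_pos fun i _ => (hp i).1)
    refine Finset.sum_pos' (fun S _ => mul_nonneg (hw S).le (hnn S)) ⟨S₀, Finset.mem_univ _, ?_⟩
    exact mul_pos (hw S₀) hS₀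
  · intro h
    exact ⟨det_nonneg_of_pos K h, sum_det K⟩
end

section
/- An n×n real matrix K is a DPP kernel if and only if for every nonzero x ∈ ℝⁿ there exists an index i with x_i ≠ 0, x_i (Kx)_i ≥ 0, and |(Kx)_i| ≤ |x_i|. -/
open Matrix BigOperators Finset

/-- `K` is a DPP kernel: each value `P(X = Sᶜ) = det(D(1_{Sᶜ})(I-K) + D(1_S)K)` is
nonnegative, i.e. `K` defines a determinantal point process. -/
def IsDPPKernel {n : ℕ} (K : Matrix (Fin n) (Fin n) ℝ) : Prop :=
  ∀ S : Finset (Fin n),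
    0 ≤ (Matrix.diagonal (indVec Sᶜ) * (1 - K) + Matrix.diagonal (indVec S) * K).det

/-!
Put `M(μ) = D(μ)(I - K) + D(1 - μ)K` for `μ ∈ [0,1]ⁿ`; `K` is a DPP kernel iff `det M ≥ 0` at the
vertices `μ = 1_T` of the cube. Since `det` is multilinear in the rows, `det M(μ)` is a combination
of the vertex values with the weights `∏_{i∈T} μᵢ ∏_{i∉T} (1 - μᵢ)`, and the vertex values sum to
`det I = 1`. Hence for a DPP kernel `det M(μ) > 0` on the open cube. Conversely, if `det M(μ) ≠ 0`
on the (connected) open cube, then it is positive there, as `M(1/2, …, 1/2) = I/2`, and by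
continuity nonnegative at the vertices.

Finally `(M(μ)x)ᵢ = μᵢ xᵢ + (1 - 2μᵢ)(Kx)ᵢ`, and some `μᵢ ∈ (0,1)` makes this vanish exactly when
`xᵢ = 0` or `(Kx)ᵢ / xᵢ ∉ [0,1]`. So `M(μ)` is singular for some `μ` in the open cube iff the
pointwise condition fails for some `x ≠ 0`.
-/

section DetExpansion

variable {ι R : Type*} [Fintype ι] [DecidableEq ι] [CommRing R]

theorem Matrix.det_diagonal_mul_add_diagonal_mul (a b : ι → R) (A B : Matrix ι ι R) :
    (diagonal a * A + diagonal b * B).det =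
      ∑ T : Finset ι, (∏ i ∈ T, a i) * (∏ i ∈ Tᶜ, b i) * det (T.piecewise A B) := by
  have hrows : diagonal a * A + diagonal b * B =
      (fun i => a i • A i) + fun i => b i • B i := by
    ext i j
    simp [diagonal_mul]
  have hpiece (T : Finset ι) :
      T.piecewise (fun i => a i • A i) (fun i => b i • B i) =
        fun i => T.piecewise a b i • T.piecewise A B i := by
    ext i j
    by_cases hi : i ∈ T <;> simp [hi, Finset.piecewise]
  rw [hrows]
  refine (detRowAlternating.toMultilinearMap.map_add_univ _ _).trans (sum_congr rfl fun T _ => ?_)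
  rw [hpiece, MultilinearMap.map_smul_univ, prod_piecewise, univ_inter, ← compl_eq_univ_sdiff,
    smul_eq_mul]
  rfl

theorem sum_det_piecewise_one_sub (K : Matrix ι ι R) :
    ∑ T : Finset ι, det (T.piecewise (1 - K : Matrix ι ι R) K) = 1 := by
  have h := (det_diagonal_mul_add_diagonal_mul (fun _ => 1) (fun _ => 1) (1 - K) K).symm
  simpa using h

end DetExpansion

theorem exists_mem_Ioo_mul_add_eq_zero_iff (a b : ℝ) :
    (∃ μ ∈ Set.Ioo (0 : ℝ) 1, μ * a + (1 - 2 * μ) * b = 0) ↔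
      (a ≠ 0 → 0 ≤ a * b → |a| < |b|) := by
  constructor
  · rintro ⟨μ, ⟨hμ0, hμ1⟩, hμ⟩ ha hab
    by_contra! hba
    have hab_le : a * b ≤ a ^ 2 := by
      nlinarith [abs_mul_abs_self a, abs_mul a b, le_abs_self (a * b), abs_nonneg a]
    have ha2 := sq_pos_of_ne_zero ha
    have : 0 < a * (μ * a + (1 - 2 * μ) * b) := by
      rcases le_total (2 * μ) 1 with hμ2 | hμ2 <;> nlinarith
    simp [hμ] at this
  · intro h
    by_cases ha : a = 0
    · exact ⟨1 / 2, by norm_num, by simp [ha]⟩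
    -- `a * b ∉ [0, a ^ 2]`, and `μ = a b / (2 a b - a ^ 2)` solves the equation times `a`
    have hab : a * b < 0 ∨ a ^ 2 < a * b := by
      rcases lt_or_ge (a * b) 0 with hab | hab
      · exact Or.inl hab
      · have := h ha hab
        right
        calc a ^ 2 = |a| * |a| := by rw [abs_mul_abs_self, sq]
          _ < |a| * |b| := mul_lt_mul_of_pos_left this (abs_pos.2 ha)
          _ = a * b := by rw [← abs_mul, abs_of_nonneg hab]
    have hd : 2 * (a * b) - a ^ 2 ≠ 0 := by
      rcases hab with hab | hab <;> nlinarith [sq_nonneg a]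
    refine ⟨a * b / (2 * (a * b) - a ^ 2), ⟨?_, ?_⟩, ?_⟩
    · rcases hab with hab | hab
      · exact div_pos_of_neg_of_neg hab (by nlinarith [sq_nonneg a])
      · exact div_pos (by nlinarith [sq_nonneg a]) (by nlinarith [sq_nonneg a])
    · rcases hab with hab | hab
      · rw [div_lt_one_of_neg (by nlinarith [sq_nonneg a])]; nlinarith [sq_nonneg a]
      · rw [div_lt_one (by nlinarith [sq_nonneg a])]; nlinarith [sq_pos_of_ne_zero ha]
    · have hμd := div_mul_cancel₀ (a * b) hd
      refine (mul_eq_zero.1 ?_).resolve_left ha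
      linear_combination -hμd

section KernelMix

variable {ι : Type*} [Fintype ι] [DecidableEq ι]

def kernelMix (K : Matrix ι ι ℝ) (μ : ι → ℝ) : Matrix ι ι ℝ :=
  diagonal μ * (1 - K) + diagonal (1 - μ) * K

theorem kernelMix_mulVec_apply (K : Matrix ι ι ℝ) (μ x : ι → ℝ) (i : ι) :
    (kernelMix K μ *ᵥ x) i = μ i * x i + (1 - 2 * μ i) * (K *ᵥ x) i := by
  simp only [kernelMix, add_mulVec, ← mulVec_mulVec, sub_mulVec, one_mulVec, Pi.add_apply,
    mulVec_diagonal, Pi.sub_apply, Pi.one_apply]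
  ring

theorem continuous_det_kernelMix (K : Matrix ι ι ℝ) :
    Continuous fun μ => (kernelMix K μ).det := by
  unfold kernelMix
  fun_prop

theorem exists_det_kernelMix_eq_zero_iff (K : Matrix ι ι ℝ) :
    (∃ μ : ι → ℝ, (∀ i, μ i ∈ Set.Ioo 0 1) ∧ (kernelMix K μ).det = 0) ↔
      ∃ x : ι → ℝ, x ≠ 0 ∧ ∀ i, x i ≠ 0 → 0 ≤ x i * (K *ᵥ x) i → |x i| < |(K *ᵥ x) i| := by
  simp_rw [← exists_mulVec_eq_zero_iff, funext_iff, kernelMix_mulVec_apply, Pi.zero_apply,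
    ← exists_mem_Ioo_mul_add_eq_zero_iff]
  constructor
  · rintro ⟨μ, hμ, x, hx, hμx⟩
    exact ⟨x, hx, fun i => ⟨μ i, hμ i, hμx i⟩⟩
  · rintro ⟨x, hx, h⟩
    choose μ hμ hμx using h
    exact ⟨μ, hμ, x, hx, hμx⟩

end KernelMix

section DPP

variable {n : ℕ}

theorem one_sub_indVec (T : Finset (Fin n)) : 1 - indVec T = indVec Tᶜ := by
  ext i
  by_cases hi : i ∈ T <;> simp [indVec, hi]

theorem kernelMix_indVec (K : Matrix (Fin n) (Fin n) ℝ) (T : Finset (Fin n)) :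
    kernelMix K (indVec T) = T.piecewise (1 - K : Matrix (Fin n) (Fin n) ℝ) K := by
  ext i j
  by_cases hi : i ∈ T <;>
    simp [kernelMix, one_sub_indVec, indVec, diagonal_mul, Finset.piecewise, hi]

theorem isDPPKernel_iff_det_kernelMix_indVec_nonneg (K : Matrix (Fin n) (Fin n) ℝ) :
    IsDPPKernel K ↔ ∀ T : Finset (Fin n), 0 ≤ (kernelMix K (indVec T)).det := by
  have h (S : Finset (Fin n)) : kernelMix K (indVec Sᶜ) =
      diagonal (indVec Sᶜ) * (1 - K) + diagonal (indVec S) * K := by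
    rw [kernelMix, one_sub_indVec, compl_compl]
  refine ⟨fun hK T => ?_, fun hK S => h S ▸ hK Sᶜ⟩
  have := hK Tᶜ
  rwa [← h, compl_compl] at this

theorem IsDPPKernel.det_kernelMix_pos {K : Matrix (Fin n) (Fin n) ℝ} (hK : IsDPPKernel K)
    {μ : Fin n → ℝ} (hμ : ∀ i, μ i ∈ Set.Ioo 0 1) : 0 < (kernelMix K μ).det := by
  rw [isDPPKernel_iff_det_kernelMix_indVec_nonneg] at hK
  have hweight (T : Finset (Fin n)) : 0 < (∏ i ∈ T, μ i) * ∏ i ∈ Tᶜ, (1 - μ) i :=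
    mul_pos (prod_pos fun i _ => (hμ i).1) (prod_pos fun i _ => sub_pos.2 (hμ i).2)
  obtain ⟨T, -, hT⟩ : ∃ T ∈ univ, 0 < (kernelMix K (indVec T)).det := by
    refine exists_lt_of_sum_lt ?_
    simpa [kernelMix_indVec] using (sum_det_piecewise_one_sub K).symm ▸ zero_lt_one
  rw [kernelMix, det_diagonal_mul_add_diagonal_mul]
  refine sum_pos' (fun T _ => ?_) ⟨T, mem_univ T, ?_⟩ <;> rw [← kernelMix_indVec]
  · exact mul_nonneg (hweight T).le (hK T)
  · exact mul_pos (hweight T) hT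

theorem isDPPKernel_of_det_kernelMix_ne_zero {K : Matrix (Fin n) (Fin n) ℝ}
    (h : ∀ μ : Fin n → ℝ, (∀ i, μ i ∈ Set.Ioo 0 1) → (kernelMix K μ).det ≠ 0) :
    IsDPPKernel K := by
  set cube := Set.univ.pi fun _ : Fin n => Set.Ioo (0 : ℝ) 1
  have hcont := continuous_det_kernelMix K
  have hcenter : (fun _ => 2⁻¹) ∈ cube := fun _ _ => by norm_num
  have hcenter_pos : 0 < (kernelMix K fun _ => 2⁻¹).det := by
    have : kernelMix K (fun _ => 2⁻¹) = diagonal fun _ => 2⁻¹ := by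
      rw [kernelMix, show (1 : Fin n → ℝ) - (fun _ => 2⁻¹) = fun _ => 2⁻¹ by ext; norm_num,
        ← mul_add, sub_add_cancel, mul_one]
    rw [this, det_diagonal]
    positivity
  have hpos : ∀ μ ∈ cube, 0 < (kernelMix K μ).det := by
    intro μ hμ
    by_contra! hle
    obtain ⟨ν, hν, hν0⟩ := (isPreconnected_univ_pi fun _ => isPreconnected_Ioo).intermediate_value
      hμ hcenter hcont.continuousOn ⟨hle, hcenter_pos.le⟩
    exact h ν (fun i => hν i (Set.mem_univ i)) hν0
  have hvertex (T : Finset (Fin n)) : indVec T ∈ closure cube := by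
    rw [closure_pi_set, closure_Ioo zero_ne_one]
    intro i _
    by_cases hi : i ∈ T <;> simp [indVec, hi]
  rw [isDPPKernel_iff_det_kernelMix_indVec_nonneg]
  exact fun T => (isClosed_le continuous_const hcont).closure_subset_iff.2
    (fun μ hμ => (hpos μ hμ).le) (hvertex T)

end DPP

theorem isDPPKernel_iff_pointwise {n : ℕ} (K : Matrix (Fin n) (Fin n) ℝ) :
    IsDPPKernel K ↔
      ∀ x : Fin n → ℝ, x ≠ 0 → ∃ i : Fin n,
        x i ≠ 0 ∧ 0 ≤ x i * K.mulVec x i ∧ |K.mulVec x i| ≤ |x i| := by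
  have hsing := exists_det_kernelMix_eq_zero_iff K
  constructor
  · intro hK
    by_contra! hx
    obtain ⟨μ, hμ, hdet⟩ := hsing.2 hx
    exact (hK.det_kernelMix_pos hμ).ne' hdet
  · intro hK
    refine isDPPKernel_of_det_kernelMix_ne_zero fun μ hμ hdet => ?_
    obtain ⟨x, hx, hxK⟩ := hsing.1 ⟨μ, hμ, hdet⟩
    obtain ⟨i, hxi, hnonneg, hle⟩ := hK x hx
    exact (hxK i hxi hnonneg).not_ge hle
end

section
/- If K ∈ M_n(ℝ) is a DPP kernel, then for every λ ∈ [0,1], the matrix (1−λ)K + (λ/2)I_n is also a DPP kernel. In other words, the set of DPP kernels is star-shaped with center (1/2)I_n. -/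
open Matrix BigOperators Finset

/-!
Row `i` of `D(1_{Sᶜ})(I - K) + D(1_S) K` is `K i` for `i ∈ S` and `(1 - K) i` otherwise.
For `t ∈ [0, 1]`, every row of the corresponding matrix of `t • K + (1 - t) • (1 - K)` is
a convex combination of `K i` and `(1 - K) i`, and expanding the determinant multilinearly in the
rows writes it as a nonnegative combination of the determinants for `K`. Finally
`(1 - λ) K + (λ / 2) I = (1 - λ / 2) K + (λ / 2) (I - K)`.
-/

namespace Matrix

variable {n R : Type*} [Fintype n] [DecidableEq n]

theorem det_of_smul_add_smul [CommRing R] (A B : Matrix n n R) (a b : n → R) :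
    (of fun i => a i • A i + b i • B i).det =
      ∑ T : Finset n, (∏ i, if i ∈ T then a i else b i) *
        (of fun i => if i ∈ T then A i else B i).det := by
  change detRowAlternating.toMultilinearMap ((fun i => a i • A i) + fun i => b i • B i) = _
  rw [MultilinearMap.map_add_univ]
  refine Finset.sum_congr rfl fun T _ => ?_
  have hrows : T.piecewise (fun i => a i • A i) (fun i => b i • B i) =
      fun i => (if i ∈ T then a i else b i) • if i ∈ T then A i else B i := by
    ext i : 1
    by_cases hi : i ∈ T <;> simp [hi]
  rw [hrows, MultilinearMap.map_smul_univ, smul_eq_mul]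
  rfl

theorem det_of_smul_add_smul_nonneg [CommRing R] [PartialOrder R] [IsOrderedRing R]
    (A B : Matrix n n R) {a b : n → R} (ha : ∀ i, 0 ≤ a i) (hb : ∀ i, 0 ≤ b i)
    (h : ∀ T : Finset n, 0 ≤ (of fun i => if i ∈ T then A i else B i).det) :
    0 ≤ (of fun i => a i • A i + b i • B i).det := by
  rw [det_of_smul_add_smul]
  refine Finset.sum_nonneg fun T _ => mul_nonneg (Finset.prod_nonneg fun i _ => ?_) (h T)
  split_ifs
  exacts [ha i, hb i]

end Matrix

open Matrix

theorem diagonal_indVec_mul_add {n : ℕ} (S : Finset (Fin n))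
    (A B : Matrix (Fin n) (Fin n) ℝ) :
    diagonal (indVec Sᶜ) * B + diagonal (indVec S) * A =
      of fun i => if i ∈ S then A i else B i := by
  ext i j
  by_cases hi : i ∈ S <;> simp [hi, indVec, diagonal_mul]

theorem isDPPKernel_iff {n : ℕ} (K : Matrix (Fin n) (Fin n) ℝ) :
    IsDPPKernel K ↔
      ∀ S : Finset (Fin n), 0 ≤ (of fun i => if i ∈ S then K i else (1 - K) i).det := by
  simp only [IsDPPKernel, diagonal_indVec_mul_add]

theorem IsDPPKernel.smul_add_smul_one_sub {n : ℕ} {K : Matrix (Fin n) (Fin n) ℝ}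
    (hK : IsDPPKernel K) {t : ℝ} (ht₀ : 0 ≤ t) (ht₁ : t ≤ 1) :
    IsDPPKernel (t • K + (1 - t) • (1 - K)) := by
  rw [isDPPKernel_iff] at hK ⊢
  intro S
  set a : Fin n → ℝ := fun i => if i ∈ S then t else 1 - t
  set b : Fin n → ℝ := fun i => if i ∈ S then 1 - t else t
  have hrows : (of fun i => if i ∈ S then (t • K + (1 - t) • (1 - K)) i
      else (1 - (t • K + (1 - t) • (1 - K))) i) =
        of fun i => a i • K i + b i • (1 - K) i := by
    ext i j
    by_cases hi : i ∈ S
    · simp [a, b, hi]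
    · simp [a, b, hi]
      ring
  have ha : ∀ i, 0 ≤ a i := fun i => by dsimp only [a]; split_ifs <;> linarith
  have hb : ∀ i, 0 ≤ b i := fun i => by dsimp only [b]; split_ifs <;> linarith
  rw [hrows]
  exact det_of_smul_add_smul_nonneg K (1 - K) ha hb hK

theorem dpp_kernels_star_shaped {n : ℕ} (K : Matrix (Fin n) (Fin n) ℝ)
    (hK : IsDPPKernel K) (lam : ℝ) (hlam : lam ∈ Set.Icc (0 : ℝ) 1) :
    IsDPPKernel ((1 - lam) • K + (lam / 2) • (1 : Matrix (Fin n) (Fin n) ℝ)) := by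
  obtain ⟨hlam₀, hlam₁⟩ := hlam
  have hK' : (1 - lam) • K + (lam / 2) • (1 : Matrix (Fin n) (Fin n) ℝ) =
      (1 - lam / 2) • K + (1 - (1 - lam / 2)) • (1 - K) := by
    module
  rw [hK']
  exact hK.smul_add_smul_one_sub (by linarith) (by linarith)
end

section
/- Let K be an n×n real matrix whose diagonal entries lie in [0,1] and such that for every row i, min(K_{ii}, 1 − K_{ii}) > Σ_{j ≠ i} |K_{ij}|. Then K is a DPP kernel. -/
open Matrix BigOperators Finset

/-- A strictly row diagonally dominant real matrix with positive diagonal has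
positive determinant. -/
lemma det_pos_of_dd {n : ℕ} (A : Matrix (Fin n) (Fin n) ℝ)
    (h : ∀ k, ∑ j ∈ Finset.univ.erase k, |A k j| < A k k) : 0 < A.det := by
  set f : ℝ → ℝ := fun t => (Matrix.of fun i j => if i = j then A i i else t * A i j).det with hf
  have hdiagpos : ∀ k, 0 < A k k := fun k =>
    lt_of_le_of_lt (Finset.sum_nonneg fun j _ => abs_nonneg _) (h k)
  have hcont : Continuous f := by
    apply Continuous.matrix_det
    apply continuous_matrix
    intro i j
    by_cases hij : i = j <;> simp [hij] <;> fun_prop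
  have hne : ∀ t ∈ Set.Icc (0:ℝ) 1, f t ≠ 0 := by
    intro t ht
    apply det_ne_zero_of_sum_row_lt_diag
    intro k
    simp only [Matrix.of_apply, Real.norm_eq_abs]
    calc ∑ j ∈ Finset.univ.erase k, |if k = j then A k k else t * A k j|
        = ∑ j ∈ Finset.univ.erase k, |t * A k j| := by
          apply Finset.sum_congr rfl
          intro j hj
          rw [if_neg (Ne.symm (Finset.ne_of_mem_erase hj))]
      _ ≤ ∑ j ∈ Finset.univ.erase k, |A k j| := by
          apply Finset.sum_le_sum
          intro j _
          rw [abs_mul]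
          exact mul_le_of_le_one_left (abs_nonneg _) (abs_le.mpr ⟨by linarith [ht.1], ht.2⟩)
      _ < A k k := h k
      _ ≤ |A k k| := le_abs_self _
  have hf0 : 0 < f 0 := by
    have hmat : (Matrix.of fun i j => if i = j then A i i else (0:ℝ) * A i j)
        = Matrix.diagonal fun i => A i i := by
      ext i j
      by_cases hij : i = j <;> simp [Matrix.diagonal, hij]
    have : f 0 = (Matrix.diagonal fun i => A i i).det := by
      show (Matrix.of fun i j => if i = j then A i i else (0:ℝ) * A i j).det = _
      rw [hmat]
    rw [this, Matrix.det_diagonal]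
    exact Finset.prod_pos fun i _ => hdiagpos i
  have hf1 : A.det = f 1 := by
    have hmat : (Matrix.of fun i j => if i = j then A i i else (1:ℝ) * A i j) = A := by
      ext i j
      by_cases hij : i = j <;> simp [hij]
    show _ = (Matrix.of fun i j => if i = j then A i i else (1:ℝ) * A i j).det
    rw [hmat]
  rw [hf1]
  rcases lt_or_ge 0 (f 1) with h1 | h1
  · exact h1
  · exfalso
    have h1' : f 1 < 0 := lt_of_le_of_ne h1 (hne 1 (by norm_num))
    obtain ⟨t, ht, hft⟩ := intermediate_value_Icc' (by norm_num : (0:ℝ) ≤ 1)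
      (hcont.continuousOn) (Set.mem_Icc.mpr ⟨le_of_lt h1', le_of_lt hf0⟩)
    exact hne t ht hft

theorem doubly_diagonally_dominant_isDPPKernel {n : ℕ} (K : Matrix (Fin n) (Fin n) ℝ)
    (hdiag : ∀ i, K i i ∈ Set.Icc (0 : ℝ) 1)
    (hdom : ∀ i, ∑ j ∈ Finset.univ.filter (fun j => j ≠ i), |K i j|
      < min (K i i) (1 - K i i)) :
    IsDPPKernel K := by
  intro S
  set M := Matrix.diagonal (indVec Sᶜ) * (1 - K) + Matrix.diagonal (indVec S) * K with hM
  have hentry : ∀ i j, M i j =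
      if i ∈ S then K i j else ((1:Matrix (Fin n) (Fin n) ℝ) - K) i j := by
    intro i j
    simp only [hM, Matrix.add_apply, Matrix.diagonal_mul, indVec, Finset.mem_compl]
    by_cases hi : i ∈ S <;> simp [hi]
  apply le_of_lt
  apply det_pos_of_dd
  intro k
  have hoff : ∀ j ∈ Finset.univ.erase k, |M k j| = |K k j| := by
    intro j hj
    have hjk : j ≠ k := Finset.ne_of_mem_erase hj
    rw [hentry k j]
    by_cases hk : k ∈ S
    · simp [hk]
    · simp [hk, Matrix.sub_apply, Matrix.one_apply, (Ne.symm hjk : k ≠ j), abs_neg]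
  have hsum : ∑ j ∈ Finset.univ.erase k, |M k j| = ∑ j ∈ Finset.univ.erase k, |K k j| :=
    Finset.sum_congr rfl hoff
  have herase : Finset.univ.erase k = Finset.univ.filter (fun j => j ≠ k) := by
    ext j; simp [Finset.mem_erase, and_comm]
  rw [hsum, herase]
  have hdiagM : M k k = if k ∈ S then K k k else 1 - K k k := by
    rw [hentry k k]
    by_cases hk : k ∈ S <;> simp [hk, Matrix.sub_apply, Matrix.one_apply]
  rw [hdiagM]
  rcases (hdom k).trans_le (min_le_left _ _) with h1
  rcases (hdom k).trans_le (min_le_right _ _) with h2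
  by_cases hk : k ∈ S <;> simp [hk, h1, h2]
end

section
/- Let M be an n×n real matrix with spectral norm ‖M‖₂ ≤ 1. Then K = (1/2)(I_n − M) is a DPP kernel. -/
/-!
With `K = (1 - M) / 2` and the sign vector `ε = 1_{Sᶜ} - 1_S`, the matrix
`D(1_{Sᶜ})(1 - K) + D(1_S) K` equals `(1 + D(ε) M) / 2`. Multiplying by the diagonal sign
matrix `D(ε)` keeps the spectral norm at most `1`, and `det (1 + A) ≥ 0` for every `A` with
`‖A‖₂ ≤ 1`: for `0 ≤ t < 1` the matrix `1 + t A` is invertible (Neumann series), so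
`t ↦ det (1 + t A)` starts at `1` and cannot become negative before `t = 1`.
-/

open Matrix BigOperators Finset

section L2OpNorm

open scoped Matrix.Norms.L2Operator

variable {ι : Type*} [Fintype ι] [DecidableEq ι]

theorem Matrix.det_one_add_ne_zero_of_norm_lt_one {A : Matrix ι ι ℝ} (hA : ‖A‖ < 1) :
    (1 + A).det ≠ 0 := by
  have hunit : IsUnit (1 - -A) := isUnit_one_sub_of_norm_lt_one (by rwa [norm_neg])
  rw [sub_neg_eq_add, isUnit_iff_isUnit_det] at hunit
  exact hunit.ne_zero

theorem Matrix.det_one_add_nonneg_of_norm_le_one {A : Matrix ι ι ℝ} (hA : ‖A‖ ≤ 1) :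
    0 ≤ (1 + A).det := by
  by_contra! hneg
  let f : ℝ → ℝ := fun t => (1 + t • A).det
  have hf : Continuous f := (continuous_const.add (continuous_id.smul continuous_const)).matrix_det
  have hzero : (0 : ℝ) ∈ Set.Icc (f 1) (f 0) := ⟨by simpa [f] using hneg.le, by simp [f]⟩
  obtain ⟨t, ⟨ht0, ht1⟩, hft⟩ := intermediate_value_Icc' zero_le_one hf.continuousOn hzero
  have ht_lt : t < 1 := ht1.lt_of_ne fun h => by subst h; simp [f] at hft; linarith
  have hnorm : ‖t • A‖ < 1 := by
    rw [norm_smul, Real.norm_of_nonneg ht0]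
    nlinarith [norm_nonneg A]
  exact det_one_add_ne_zero_of_norm_lt_one hnorm hft

theorem Matrix.norm_diagonal_mul_le {v : ι → ℝ} (hv : ‖v‖ ≤ 1) (A : Matrix ι ι ℝ) :
    ‖diagonal v * A‖ ≤ ‖A‖ :=
  calc ‖diagonal v * A‖ ≤ ‖diagonal v‖ * ‖A‖ := l2_opNorm_mul _ _
    _ ≤ ‖A‖ := by
      rw [l2_opNorm_diagonal]
      exact mul_le_of_le_one_left (norm_nonneg A) hv

end L2OpNorm

theorem norm_indVec_compl_sub_indVec_le_one {n : ℕ} (S : Finset (Fin n)) :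
    ‖indVec Sᶜ - indVec S‖ ≤ 1 :=
  pi_norm_le_iff_of_nonneg zero_le_one |>.mpr fun i => by
    by_cases hi : i ∈ S <;> simp [indVec, hi]

theorem diagonal_indVec_mul_half_one_sub {n : ℕ} (S : Finset (Fin n))
    (M : Matrix (Fin n) (Fin n) ℝ) :
    diagonal (indVec Sᶜ) * (1 - (1 / 2 : ℝ) • (1 - M)) +
        diagonal (indVec S) * ((1 / 2 : ℝ) • (1 - M)) =
      (1 / 2 : ℝ) • (1 + diagonal (indVec Sᶜ - indVec S) * M) := by
  ext i j
  rcases eq_or_ne i j with rfl | hij <;> by_cases hi : i ∈ S <;>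
    simp [diagonal_mul, indVec, one_apply, *] <;> ring

theorem half_identity_perturbation_isDPPKernel {n : ℕ} (M : Matrix (Fin n) (Fin n) ℝ)
    (hM : ‖Matrix.toEuclideanCLM (𝕜 := ℝ) M‖ ≤ 1) :
    IsDPPKernel ((1 / 2 : ℝ) • ((1 : Matrix (Fin n) (Fin n) ℝ) - M)) := by
  intro S
  rw [diagonal_indVec_mul_half_one_sub, det_smul]
  refine mul_nonneg (by positivity) (det_one_add_nonneg_of_norm_le_one ?_)
  -- the L2 operator norm of a matrix is by definition that of `toEuclideanCLM`
  exact (norm_diagonal_mul_le (norm_indVec_compl_sub_indVec_le_one S) M).trans hM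
end

section
/- Let L be an n×n real P_0 matrix (all principal minors nonnegative) and let λ be a nonzero complex eigenvalue of L. Then |arg(λ)| ≤ π − π/n. In particular every real eigenvalue of L is nonnegative. -/
/-!
Since `L v = λ v`, `det (L - λ) = 0`, and expanding the determinant along the identity gives
`∑_S (-λ) ^ (n - |S|) det L[S] = 0`: a polynomial in `z = -λ` of degree `n` with nonnegative
coefficients and leading coefficient `det L[∅] = 1`. If `|arg z| < π / n`, multiplying by
`exp (-i n arg z / 2)` turns each `z ^ k` with `k ≤ n` into a number of argument
`(k - n / 2) arg z ∈ (-π / 2, π / 2)`, so the rotated sum has positive real part and cannot vanish.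
Hence `π / n ≤ |arg (-λ)| = π - |arg λ|`.
-/

open Matrix BigOperators Finset Real

theorem Matrix.det_add_smul_one {ι R : Type*} [Fintype ι] [DecidableEq ι] [CommRing R]
    (M : Matrix ι ι R) (z : R) :
    (M + z • 1).det = ∑ s : Finset ι, z ^ sᶜ.card * (M.submatrix (↑) (↑) : Matrix s s R).det := by
  have hrows : ∀ s : Finset ι, s.piecewise M.row (z • 1 : Matrix ι ι R).row
      = fun i => (if i ∈ sᶜ then z else 1) • s.piecewise M.row (1 : Matrix ι ι R).row i := by
    intro s
    ext i j
    by_cases hi : i ∈ s <;> simp [hi, Finset.piecewise]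
  change detRowAlternating (M.row + (z • 1 : Matrix ι ι R).row) = _
  rw [(detRowAlternating : (ι → R) [⋀^ι]→ₗ[R] R).map_add_univ]
  refine sum_congr rfl fun s _ => ?_
  rw [hrows, AlternatingMap.map_smul_univ, prod_ite_mem, univ_inter, prod_const, smul_eq_mul,
    ← det_piecewise_one_eq_submatrix_det]
  rfl

namespace Complex

lemma abs_arg_eq_arccos {z : ℂ} (hz : z ≠ 0) : |arg z| = arccos (z.re / ‖z‖) := by
  rw [← cos_arg hz, ← Real.cos_abs, Real.arccos_cos (abs_nonneg _) (abs_arg_le_pi z)]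

lemma abs_arg_neg {z : ℂ} (hz : z ≠ 0) : |arg (-z)| = π - |arg z| := by
  rw [abs_arg_eq_arccos (neg_ne_zero.2 hz), abs_arg_eq_arccos hz, neg_re, norm_neg, neg_div,
    arccos_neg]

lemma re_exp_mul_pow_pos_of_abs_arg_lt {z : ℂ} {n k : ℕ} (hz : z ≠ 0) (harg : |arg z| < π / n)
    (hk : k ≤ n) : 0 < (exp (-(n * arg z / 2 : ℝ) * I) * z ^ k).re := by
  have hn : (0 : ℝ) < n := by
    rcases n.eq_zero_or_pos with rfl | hn
    · simp only [CharP.cast_eq_zero, div_zero] at harg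
      linarith [abs_nonneg (arg z)]
    · exact_mod_cast hn
  have hpow : z ^ k = ((‖z‖ ^ k : ℝ) : ℂ) * exp ((k * arg z : ℝ) * I) := by
    conv_lhs => rw [← norm_mul_exp_arg_mul_I z]
    rw [mul_pow, ← exp_nat_mul]
    push_cast
    ring_nf
  have hrot : exp (-(n * arg z / 2 : ℝ) * I) * z ^ k
      = ((‖z‖ ^ k : ℝ) : ℂ) * exp (((k - n / 2) * arg z : ℝ) * I) := by
    rw [hpow, mul_left_comm, ← exp_add]
    push_cast
    ring_nf
  have hangle : |(k - n / 2) * arg z| < π / 2 := by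
    have hkn : |(k : ℝ) - n / 2| ≤ n / 2 := by
      have : (k : ℝ) ≤ n := by exact_mod_cast hk
      rw [abs_le]
      constructor <;> linarith [(k.cast_nonneg : (0 : ℝ) ≤ k)]
    calc |(k - n / 2) * arg z| = |(k : ℝ) - n / 2| * |arg z| := abs_mul _ _
      _ ≤ n / 2 * |arg z| := by gcongr
      _ < n / 2 * (π / n) := by gcongr
      _ = π / 2 := by field_simp
  rw [hrot, re_ofReal_mul, exp_ofReal_mul_I_re]
  exact mul_pos (pow_pos (norm_pos_iff.2 hz) k) (cos_pos_of_mem_Ioo (abs_lt.1 hangle))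

theorem sum_pow_mul_ne_zero_of_abs_arg_lt {ι : Type*} {s : Finset ι} {c : ι → ℝ} {k : ι → ℕ}
    {n : ℕ} {z : ℂ} (hz : z ≠ 0) (harg : |arg z| < π / n) (hc : ∀ i ∈ s, 0 ≤ c i)
    (hk : ∀ i ∈ s, k i ≤ n) (hpos : ∃ i ∈ s, 0 < c i) :
    ∑ i ∈ s, z ^ k i * (c i : ℂ) ≠ 0 := by
  set u := exp (-(n * arg z / 2 : ℝ) * I)
  have hterm : ∀ i, (u * (z ^ k i * (c i : ℂ))).re = (u * z ^ k i).re * c i := fun i => by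
    rw [← mul_assoc, re_mul_ofReal]
  intro h
  have hre : 0 < (u * ∑ i ∈ s, z ^ k i * (c i : ℂ)).re := by
    rw [mul_sum, re_sum]
    obtain ⟨j, hj, hcj⟩ := hpos
    refine sum_pos' (fun i hi => ?_) ⟨j, hj, ?_⟩ <;> rw [hterm]
    · exact mul_nonneg (re_exp_mul_pow_pos_of_abs_arg_lt hz harg (hk i hi)).le (hc i hi)
    · exact mul_pos (re_exp_mul_pow_pos_of_abs_arg_lt hz harg (hk j hj)) hcj
  simp [h] at hre

end Complex

theorem arg_eigenvalue_of_P0 {n : ℕ} (L : Matrix (Fin n) (Fin n) ℝ)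
    (hP0 : ∀ S : Finset (Fin n), 0 ≤ pminor L S)
    (lam : ℂ) (hlam : lam ≠ 0) (v : Fin n → ℂ) (hv : v ≠ 0)
    (heig : (L.map (fun x : ℝ => (x : ℂ))).mulVec v = lam • v) :
    |lam.arg| ≤ π - π / n ∧ (lam.im = 0 → 0 ≤ lam.re) := by
  have hn : 0 < n := Nat.pos_of_ne_zero (by rintro rfl; exact hv (Subsingleton.elim _ _))
  have hchar : (L.map (fun x : ℝ => (x : ℂ)) + (-lam) • 1).det = 0 := by
    rw [← exists_mulVec_eq_zero_iff]
    exact ⟨v, hv, by rw [add_mulVec, heig, smul_mulVec, one_mulVec, neg_smul, add_neg_cancel]⟩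
  have hminor (S : Finset (Fin n)) :
      ((L.map (fun x : ℝ => (x : ℂ))).submatrix (↑) (↑) : Matrix S S ℂ).det = pminor L S :=
    (RingHom.map_det Complex.ofRealHom _).symm
  rw [det_add_smul_one] at hchar
  simp only [hminor] at hchar
  have harg : π / n ≤ |(-lam).arg| := not_lt.1 fun h =>
    Complex.sum_pow_mul_ne_zero_of_abs_arg_lt (neg_ne_zero.2 hlam) h (fun S _ => hP0 S)
      (fun S _ => (card_le_univ _).trans_eq (Fintype.card_fin n))
      ⟨∅, mem_univ _, by simp [pminor]⟩ hchar
  rw [Complex.abs_arg_neg hlam] at harg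
  refine ⟨by linarith, fun him => ?_⟩
  by_contra! hre
  have hpi : lam.arg = π := Complex.arg_eq_pi_iff.2 ⟨hre, him⟩
  have : 0 < π / n := by positivity
  rw [hpi, abs_of_pos pi_pos] at harg
  linarith
end

section
/- Let u, v ∈ ℝⁿ and K = (1/2)(I_n + u vᵀ). Then K is a DPP kernel if and only if Σ_{i=1}^n |u_i v_i| ≤ 1. Moreover, in that case, if X ∼ DPP(K) then P(X = S) = 2^{−n}(1 + Σ_{i∈S} u_i v_i − Σ_{i∉S} u_i v_i) for every S ⊆ {1,...,n}. -/
open Matrix BigOperators Finset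

lemma aux_det_one_add_vmv {m : Type*} [Fintype m] [DecidableEq m] (w v : m → ℝ) :
    (1 + Matrix.vecMulVec w v).det = 1 + ∑ i, w i * v i := by
  rw [Matrix.vecMulVec_eq Unit, Matrix.det_one_add_replicateCol_mul_replicateRow]
  simp [dotProduct, mul_comm]

lemma aux_powerset_sum {α : Type*} [DecidableEq α] (s : Finset α) (c : α → ℝ) (b : ℝ) :
    ∑ A ∈ s.powerset, (b + 2 * ∑ i ∈ A, c i) = 2 ^ s.card * (b + ∑ i ∈ s, c i) := by
  induction s using Finset.induction_on generalizing b with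
  | empty => simp
  | @insert a s ha ih =>
      rw [Finset.sum_powerset_insert ha, Finset.card_insert_of_notMem ha,
        Finset.sum_insert ha]
      have h2 : ∀ A ∈ s.powerset, b + 2 * ∑ i ∈ insert a A, c i
          = (b + 2 * c a) + 2 * ∑ i ∈ A, c i := by
        intro A hA
        rw [Finset.sum_insert (fun h => ha (Finset.mem_powerset.mp hA h))]; ring
      rw [Finset.sum_congr rfl h2, ih, ih]; ring

lemma aux_pminor {n : ℕ} (u v : Fin n → ℝ) (T : Finset (Fin n)) :
    pminor ((1 / 2 : ℝ) • ((1 : Matrix (Fin n) (Fin n) ℝ) + Matrix.vecMulVec u v)) T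
      = (1 / 2 : ℝ) ^ T.card * (1 + ∑ i ∈ T, u i * v i) := by
  unfold pminor
  have hinj : Function.Injective (fun i : {x // x ∈ T} => (i : Fin n)) :=
    Subtype.val_injective
  have hvmv : (Matrix.vecMulVec u v).submatrix (fun i : {x // x ∈ T} => (i : Fin n))
      (fun i : {x // x ∈ T} => (i : Fin n))
      = Matrix.vecMulVec (fun i : {x // x ∈ T} => u i) (fun i : {x // x ∈ T} => v i) := rfl
  have hsub : ((1 / 2 : ℝ) • ((1 : Matrix (Fin n) (Fin n) ℝ) + Matrix.vecMulVec u v)).submatrix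
      (fun i : {x // x ∈ T} => (i : Fin n)) (fun i : {x // x ∈ T} => (i : Fin n))
      = (1 / 2 : ℝ) • ((1 : Matrix {x // x ∈ T} {x // x ∈ T} ℝ) +
          Matrix.vecMulVec (fun i : {x // x ∈ T} => u i) (fun i : {x // x ∈ T} => v i)) := by
    ext i j
    simp only [Matrix.submatrix_apply, Matrix.smul_apply, Matrix.add_apply, Matrix.one_apply,
      Matrix.vecMulVec_apply, Subtype.val_inj, smul_eq_mul]
    try (split_ifs <;> first | ring | rfl)
  rw [hsub, Matrix.det_smul, aux_det_one_add_vmv, Fintype.card_coe]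
  congr 1
  rw [Finset.sum_coe_sort T (fun i => u i * v i)]

lemma aux_matrix_eq {n : ℕ} (u v : Fin n → ℝ) (S : Finset (Fin n)) :
    Matrix.diagonal (indVec Sᶜ) *
        (1 - (1 / 2 : ℝ) • ((1 : Matrix (Fin n) (Fin n) ℝ) + Matrix.vecMulVec u v)) +
      Matrix.diagonal (indVec S) *
        ((1 / 2 : ℝ) • ((1 : Matrix (Fin n) (Fin n) ℝ) + Matrix.vecMulVec u v))
      = (1 / 2 : ℝ) • ((1 : Matrix (Fin n) (Fin n) ℝ) +
          Matrix.vecMulVec (fun i => (if i ∈ S then 1 else -1) * u i) v) := by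
  ext i j
  simp only [Matrix.add_apply, Matrix.diagonal_mul, Matrix.sub_apply, Matrix.smul_apply,
    Matrix.one_apply, Matrix.vecMulVec_apply, indVec, Finset.mem_compl, smul_eq_mul]
  by_cases hij : i = j
  · subst hij; by_cases hiS : i ∈ S <;> (simp [hiS]; try ring)
  · by_cases hiS : i ∈ S <;> (simp [hij, hiS]; try ring)

lemma aux_sum_sign {n : ℕ} (u v : Fin n → ℝ) (S : Finset (Fin n)) :
    ∑ i, ((if i ∈ S then (1:ℝ) else -1) * u i) * v i
      = ∑ i ∈ S, u i * v i - ∑ i ∈ Sᶜ, u i * v i := by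
  rw [← Finset.sum_add_sum_compl S]
  have h1 : ∀ i ∈ S, ((if i ∈ S then (1:ℝ) else -1) * u i) * v i = u i * v i := by
    intro i hi; rw [if_pos hi]; ring
  have h2 : ∀ i ∈ Sᶜ, ((if i ∈ S then (1:ℝ) else -1) * u i) * v i = -(u i * v i) := by
    intro i hi; rw [if_neg (Finset.mem_compl.mp hi)]; ring
  rw [Finset.sum_congr rfl h1, Finset.sum_congr rfl h2, Finset.sum_neg_distrib]
  ring

lemma aux_det {n : ℕ} (u v : Fin n → ℝ) (S : Finset (Fin n)) :
    (Matrix.diagonal (indVec Sᶜ) *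
        (1 - (1 / 2 : ℝ) • ((1 : Matrix (Fin n) (Fin n) ℝ) + Matrix.vecMulVec u v)) +
      Matrix.diagonal (indVec S) *
        ((1 / 2 : ℝ) • ((1 : Matrix (Fin n) (Fin n) ℝ) + Matrix.vecMulVec u v))).det
      = (1 / 2 : ℝ) ^ n * (1 + (∑ i ∈ S, u i * v i - ∑ i ∈ Sᶜ, u i * v i)) := by
  rw [aux_matrix_eq, Matrix.det_smul, aux_det_one_add_vmv, Fintype.card_fin, aux_sum_sign]
lemma aux_gsum {n : ℕ} (u v : Fin n → ℝ) (T : Finset (Fin n)) :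
    ∑ S ∈ Finset.univ.filter (fun S : Finset (Fin n) => T ⊆ S),
        ((1 / 2 : ℝ) ^ n * (1 + ∑ i ∈ S, u i * v i - ∑ i ∈ Sᶜ, u i * v i))
      = (1 / 2 : ℝ) ^ T.card * (1 + ∑ i ∈ T, u i * v i) := by
  have hb : ∑ S ∈ Finset.univ.filter (fun S : Finset (Fin n) => T ⊆ S),
        ((1 / 2 : ℝ) ^ n * (1 + ∑ i ∈ S, u i * v i - ∑ i ∈ Sᶜ, u i * v i))
      = ∑ A ∈ Tᶜ.powerset,
        ((1 / 2 : ℝ) ^ n * (1 + ∑ i ∈ T ∪ A, u i * v i - ∑ i ∈ (T ∪ A)ᶜ, u i * v i)) := by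
    refine Finset.sum_nbij' (i := fun S => S \ T) (j := fun A => T ∪ A) ?_ ?_ ?_ ?_ ?_
    · intro S hS
      simp only [Finset.mem_filter, Finset.mem_univ, true_and] at hS
      rw [Finset.mem_powerset]
      intro x hx
      rw [Finset.mem_sdiff] at hx
      exact Finset.mem_compl.mpr hx.2
    · intro A hA
      simp only [Finset.mem_filter, Finset.mem_univ, true_and]
      exact Finset.subset_union_left
    · intro S hS
      simp only [Finset.mem_filter, Finset.mem_univ, true_and] at hS
      exact Finset.union_sdiff_of_subset hS
    · intro A hA
      rw [Finset.mem_powerset] at hA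
      exact Finset.union_sdiff_cancel_left
        (Finset.disjoint_left.mpr fun x hxT hxA => Finset.mem_compl.mp (hA hxA) hxT)
    · intro S hS
      simp only [Finset.mem_filter, Finset.mem_univ, true_and] at hS
      rw [Finset.union_sdiff_of_subset hS]
  rw [hb]
  have hval : ∀ A ∈ Tᶜ.powerset,
      (1 / 2 : ℝ) ^ n * (1 + ∑ i ∈ T ∪ A, u i * v i - ∑ i ∈ (T ∪ A)ᶜ, u i * v i)
      = (1 / 2 : ℝ) ^ n *
          ((1 + ∑ i ∈ T, u i * v i - ∑ i ∈ Tᶜ, u i * v i) + 2 * ∑ i ∈ A, u i * v i) := by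
    intro A hA
    rw [Finset.mem_powerset] at hA
    have hdisj : Disjoint T A :=
      Finset.disjoint_left.mpr fun x hxT hxA => Finset.mem_compl.mp (hA hxA) hxT
    have h1 : ∑ i ∈ T ∪ A, u i * v i = ∑ i ∈ T, u i * v i + ∑ i ∈ A, u i * v i :=
      Finset.sum_union hdisj
    have h2 : (T ∪ A)ᶜ = Tᶜ \ A := by
      rw [Finset.compl_union, sdiff_eq, Finset.inf_eq_inter]
    have h3 : ∑ i ∈ Tᶜ \ A, u i * v i = ∑ i ∈ Tᶜ, u i * v i - ∑ i ∈ A, u i * v i :=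
      Finset.sum_sdiff_eq_sub hA
    rw [h1, h2, h3]; ring
  rw [Finset.sum_congr rfl hval, ← Finset.mul_sum, aux_powerset_sum]
  have hk : T.card ≤ n := by simpa using Finset.card_le_univ T
  rw [Finset.card_compl, Fintype.card_fin]
  have h4 : ((1:ℝ) / 2) ^ n * 2 ^ (n - T.card) = (1 / 2) ^ T.card := by
    have : ((1:ℝ) / 2) ^ n = (1 / 2) ^ T.card * (1 / 2) ^ (n - T.card) := by
      rw [← pow_add, Nat.add_sub_cancel' hk]
    rw [this, mul_assoc, ← mul_pow]
    norm_num
  calc ((1:ℝ) / 2) ^ n * (2 ^ (n - T.card) *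
        ((1 + ∑ i ∈ T, u i * v i - ∑ i ∈ Tᶜ, u i * v i) + ∑ i ∈ Tᶜ, u i * v i))
      = ((1:ℝ) / 2) ^ n * 2 ^ (n - T.card) * (1 + ∑ i ∈ T, u i * v i) := by ring
    _ = (1 / 2 : ℝ) ^ T.card * (1 + ∑ i ∈ T, u i * v i) := by rw [h4]

theorem rank_one_perturbation_of_half_identity {n : ℕ} (u v : Fin n → ℝ)
    (K : Matrix (Fin n) (Fin n) ℝ)
    (hKdef : K = (1 / 2 : ℝ) • ((1 : Matrix (Fin n) (Fin n) ℝ) + Matrix.vecMulVec u v)) :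
    (IsDPPKernel K ↔ ∑ i, |u i * v i| ≤ 1) ∧
    ((∑ i, |u i * v i| ≤ 1) →
      ∀ μ : Finset (Fin n) → ℝ, (∀ S, 0 ≤ μ S) →
        (∀ T : Finset (Fin n),
          ∑ S ∈ Finset.univ.filter (fun S : Finset (Fin n) => T ⊆ S), μ S = pminor K T) →
        ∀ S : Finset (Fin n),
          μ S = (1 / 2 : ℝ) ^ n *
            (1 + ∑ i ∈ S, u i * v i - ∑ i ∈ Sᶜ, u i * v i)) := by

  subst hKdef
  constructor
  · constructor
    · intro h
      set S₀ := Finset.univ.filter (fun i => u i * v i < 0) with hS₀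
      have hd := h S₀
      rw [aux_det] at hd
      have hsum : ∑ i ∈ S₀, u i * v i - ∑ i ∈ S₀ᶜ, u i * v i = -∑ i, |u i * v i| := by
        rw [← Finset.sum_add_sum_compl S₀ (fun i => |u i * v i|)]
        have h1 : ∀ i ∈ S₀, |u i * v i| = -(u i * v i) := fun i hi =>
          abs_of_neg (by simpa [hS₀] using hi)
        have h2 : ∀ i ∈ S₀ᶜ, |u i * v i| = u i * v i := fun i hi =>
          abs_of_nonneg (not_lt.mp (by simpa [hS₀] using hi))
        rw [Finset.sum_congr rfl h1, Finset.sum_congr rfl h2, Finset.sum_neg_distrib]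
        ring
      rw [hsum] at hd
      have hp : (0:ℝ) < (1 / 2 : ℝ) ^ n := by positivity
      have := (mul_nonneg_iff_of_pos_left hp).mp hd
      linarith
    · intro h S
      rw [aux_det]
      apply mul_nonneg (by positivity)
      have hA : ∑ i ∈ S, -|u i * v i| ≤ ∑ i ∈ S, u i * v i :=
        Finset.sum_le_sum fun i _ => neg_abs_le _
      have hB : ∑ i ∈ Sᶜ, u i * v i ≤ ∑ i ∈ Sᶜ, |u i * v i| :=
        Finset.sum_le_sum fun i _ => le_abs_self _
      have hC : ∑ i ∈ S, |u i * v i| + ∑ i ∈ Sᶜ, |u i * v i| = ∑ i, |u i * v i| :=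
        Finset.sum_add_sum_compl S _
      rw [Finset.sum_neg_distrib] at hA
      linarith
  · intro _ μ _ hsum S
    have key : ∀ k : ℕ, ∀ S : Finset (Fin n), Sᶜ.card = k →
        μ S = (1 / 2 : ℝ) ^ n * (1 + ∑ i ∈ S, u i * v i - ∑ i ∈ Sᶜ, u i * v i) := by
      intro k
      induction k using Nat.strong_induction_on with
      | _ k ih =>
        intro S hS
        have hsplit : Finset.univ.filter (fun T : Finset (Fin n) => S ⊆ T)
            = insert S (Finset.univ.filter (fun T : Finset (Fin n) => S ⊂ T)) := by
          ext T
          simp only [Finset.mem_insert, Finset.mem_filter, Finset.mem_univ, true_and]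
          constructor
          · intro hST
            rcases lt_or_eq_of_le (Finset.le_iff_subset.mpr hST) with h' | h'
            · exact Or.inr (Finset.lt_iff_ssubset.mp h')
            · exact Or.inl h'.symm
          · rintro (rfl | h')
            · exact subset_rfl
            · exact h'.subset
        have hnot : S ∉ Finset.univ.filter (fun T : Finset (Fin n) => S ⊂ T) := by
          simp only [Finset.mem_filter, Finset.mem_univ, true_and]
          exact fun h => lt_irrefl S (Finset.lt_iff_ssubset.mpr h)
        have hμ := hsum S
        rw [aux_pminor] at hμ
        have hgS := aux_gsum u v S
        rw [hsplit, Finset.sum_insert hnot] at hμ hgS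
        have hstrict : ∑ T ∈ Finset.univ.filter (fun T : Finset (Fin n) => S ⊂ T), μ T
            = ∑ T ∈ Finset.univ.filter (fun T : Finset (Fin n) => S ⊂ T),
                ((1 / 2 : ℝ) ^ n * (1 + ∑ i ∈ T, u i * v i - ∑ i ∈ Tᶜ, u i * v i)) := by
          refine Finset.sum_congr rfl fun T hT => ?_
          simp only [Finset.mem_filter, Finset.mem_univ, true_and] at hT
          have hcc : Tᶜ ⊂ Sᶜ :=
            Finset.lt_iff_ssubset.mp (compl_lt_compl_iff_lt.mpr (Finset.lt_iff_ssubset.mpr hT))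
          have : Tᶜ.card < k := hS ▸ Finset.card_lt_card hcc
          exact ih Tᶜ.card this T rfl
        rw [hstrict] at hμ
        linarith
    exact key Sᶜ.card S rfl
end
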